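/- arXiv:math/9905084 — 6 statements merged into one kernel-verified Lean document; each statement's English description precedes it below -/
import Mathlib

section
/- For all real s ≥ 1/2 and 0 ≤ γ ≤ 1, the quantity F(-s;γ) := -(γ/2)(s - s⁻¹) + log s satisfies F(-s;γ) ≤ (1-γ)(s-1) + (2/3)|s-1|³. -/
/-!
Write the left-hand side as `γ f(s) + (1 - γ) log s` with `f(s) = log s - (s - s⁻¹) / 2`.
Since `log s ≤ s - 1`, it suffices to show `f(s) ≤ (2/3) |s - 1|³`. For `s ≥ 1` this is
`log s ≤ sinh (log s) = (s - s⁻¹) / 2`. For `1/2 ≤ s ≤ 1`, the bound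
`log s ≤ 2 (s - 1) / (s + 1)` reduces it to a polynomial inequality which, after dividing out
`(1 - s)³`, is `3 ≤ 4 s (s + 1)`; this is where `s ≥ 1/2` is needed.
-/

open Real

lemma Real.log_le_half_sub_inv {s : ℝ} (hs : 1 ≤ s) : log s ≤ (s - s⁻¹) / 2 := by
  rw [← sinh_log (by linarith)]
  exact self_le_sinh_iff.mpr (log_nonneg hs)

lemma Real.log_le_two_mul_sub_one_div_add_one {s : ℝ} (h0 : 0 < s) (h1 : s ≤ 1) :
    log s ≤ 2 * (s - 1) / (s + 1) := by
  have key := le_log_one_add_of_nonneg (div_nonneg (sub_nonneg.mpr h1) h0.le)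
  have harg : 1 + (1 - s) / s = s⁻¹ := by field_simp; ring
  have hden : (1 - s) / s + 2 = (s + 1) / s := by field_simp; ring
  have hval : 2 * ((1 - s) / s) / ((s + 1) / s) = -(2 * (s - 1) / (s + 1)) := by
    have : s + 1 ≠ 0 := by linarith
    field_simp
    ring
  rw [harg, log_inv, hden, hval] at key
  linarith

lemma Real.log_sub_half_sub_inv_le {s : ℝ} (hs : 1 / 2 ≤ s) :
    -(1 / 2) * (s - s⁻¹) + log s ≤ 2 / 3 * |s - 1| ^ 3 := by
  rcases le_total s 1 with h1 | h1
  · have hs0 : 0 < s := by linarith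
    have hlog := log_le_two_mul_sub_one_div_add_one hs0 h1
    rw [abs_of_nonpos (by linarith)]
    suffices 2 * (s - 1) / (s + 1) ≤ (1 / 2) * (s - s⁻¹) + 2 / 3 * (-(s - 1)) ^ 3 by linarith
    rw [div_le_iff₀ (by linarith), ← sub_nonneg]
    have hpoly : ((1 / 2) * (s - s⁻¹) + 2 / 3 * (-(s - 1)) ^ 3) * (s + 1) - 2 * (s - 1)
        = (1 - s) ^ 3 * (4 * s * (s + 1) - 3) / (6 * s) := by
      field_simp
      ring
    rw [hpoly]
    have : 0 ≤ 4 * s * (s + 1) - 3 := by nlinarith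
    positivity
  · have := log_le_half_sub_inv h1
    have : 0 ≤ 2 / 3 * |s - 1| ^ 3 := by positivity
    linarith

theorem stmt2 (s γ : ℝ) (hs : 1 / 2 ≤ s) (hγ0 : 0 ≤ γ) (hγ1 : γ ≤ 1) :
    -(γ / 2) * (s - s⁻¹) + Real.log s ≤ (1 - γ) * (s - 1) + 2 / 3 * |s - 1| ^ 3 := by
  set C := 2 / 3 * |s - 1| ^ 3
  have hf : -(1 / 2) * (s - s⁻¹) + log s ≤ C := log_sub_half_sub_inv_le hs
  have hlog : log s ≤ s - 1 := log_le_sub_one_of_pos (by linarith)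
  calc -(γ / 2) * (s - s⁻¹) + log s
      = γ * (-(1 / 2) * (s - s⁻¹) + log s) + (1 - γ) * log s := by ring
    _ ≤ γ * C + (1 - γ) * (s - 1) := by gcongr
    _ ≤ (1 - γ) * (s - 1) + C := by linarith [mul_le_of_le_one_left (show 0 ≤ C by positivity) hγ1]
end

section
/- For every s with 1/2 ≤ s ≤ 1, -(1/2)(s - s⁻¹) + log s ≤ (2/3)(1-s)³. -/
/-! The difference of the two sides vanishes at `s = 1`, and its derivative
`(1 - s)² (1 - 4 s²) / (2 s²)` is nonpositive for `s ≥ 1/2`, so it stays nonnegative on `[1/2, 1]`. -/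

open Real Set

noncomputable def cubicLogGap (x : ℝ) : ℝ :=
  2 / 3 * (1 - x) ^ 3 + 1 / 2 * (x - x⁻¹) - log x

lemma cubicLogGap_one : cubicLogGap 1 = 0 := by
  simp [cubicLogGap]

lemma hasDerivAt_cubicLogGap {x : ℝ} (hx : x ≠ 0) :
    HasDerivAt cubicLogGap ((1 - x) ^ 2 * (1 - 4 * x ^ 2) / (2 * x ^ 2)) x := by
  have hcube : HasDerivAt (fun y : ℝ => (1 - y) ^ 3) (3 * (1 - x) ^ 2 * (-1)) x :=
    (((hasDerivAt_id x).const_sub 1).pow 3).congr_deriv (by simp)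
  have hdiff : HasDerivAt (fun y : ℝ => y - y⁻¹) (1 - -(x ^ 2)⁻¹) x :=
    (hasDerivAt_id x).sub (hasDerivAt_inv hx)
  refine (((hcube.const_mul (2 / 3)).add (hdiff.const_mul (1 / 2))).sub
    (hasDerivAt_log hx)).congr_deriv ?_
  field_simp
  ring

lemma cubicLogGap_antitoneOn : AntitoneOn cubicLogGap (Ici (1 / 2)) := by
  have hderiv : ∀ x ∈ Ici (1 / 2 : ℝ),
      HasDerivAt cubicLogGap ((1 - x) ^ 2 * (1 - 4 * x ^ 2) / (2 * x ^ 2)) x :=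
    fun x hx => hasDerivAt_cubicLogGap (by linarith [mem_Ici.mp hx])
  refine antitoneOn_of_hasDerivWithinAt_nonpos (convex_Ici _)
    (fun x hx => (hderiv x hx).continuousAt.continuousWithinAt)
    (fun x hx => (hderiv x (interior_subset hx)).hasDerivWithinAt) fun x hx => ?_
  rw [interior_Ici, mem_Ioi] at hx
  have hfactor : 1 - 4 * x ^ 2 ≤ 0 := by nlinarith
  exact div_nonpos_of_nonpos_of_nonneg (mul_nonpos_of_nonneg_of_nonpos (sq_nonneg _) hfactor)
    (by positivity)

theorem stmt4 (s : ℝ) (hs1 : 1 / 2 ≤ s) (hs2 : s ≤ 1) :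
    -(1 / 2) * (s - s⁻¹) + Real.log s ≤ 2 / 3 * (1 - s) ^ 3 := by
  have hgap : cubicLogGap 1 ≤ cubicLogGap s :=
    cubicLogGap_antitoneOn hs1 (by norm_num : (1 / 2 : ℝ) ≤ 1) hs2
  rw [cubicLogGap_one, cubicLogGap] at hgap
  linarith
end

section
/- Define I(s) = (1/π) ∫_{-1}^{1} log(s² - x²) √(1 - x²) dx for s > 1. Then I(s) = s² - 1 - 2∫_1^s √(y² - 1) dy + 1/2 - log 2. -/
/-!
Write `Φ(s) = ∫_{-1}^{1} log (s² - x²) √(1 - x²) dx`. Differentiating under the integral sign,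
`Φ'(s) = ∫_{-1}^{1} 2s √(1 - x²) / (s² - x²) dx = 2π (s - √(s² - 1))`, which is also the
derivative of the right-hand side times `π` once `∫_1^s √(y² - 1) dy` is evaluated as
`(s √(s² - 1) - arcosh s) / 2`. So the two sides differ by a constant on `(1, ∞)`, and the constant
is `0` because both sides are `π log s + o(1)` as `s → ∞`: for `Φ` since
`log (s² - x²) = 2 log s + O(1 / s²)` uniformly in `x ∈ [-1, 1]` and `∫ √(1 - x²) = π / 2`.
-/

open Real Filter Topology Set intervalIntegral MeasureTheory
open scoped Interval

theorem eqOn_Ioi_of_hasDerivAt_of_tendsto_sub_atTop {E : Type*} [NormedAddCommGroup E]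
    [NormedSpace ℝ E] {f g f' : ℝ → E} {a : ℝ}
    (hf : ∀ x ∈ Ioi a, HasDerivAt f (f' x) x) (hg : ∀ x ∈ Ioi a, HasDerivAt g (f' x) x)
    (hfg : Tendsto (fun x => f x - g x) atTop (𝓝 0)) : EqOn f g (Ioi a) := by
  obtain ⟨c, hc⟩ := isOpen_Ioi.exists_eq_add_of_deriv_eq (convex_Ioi a).isPreconnected
    (fun x hx => (hf x hx).differentiableAt.differentiableWithinAt)
    (fun x hx => (hg x hx).differentiableAt.differentiableWithinAt)
    (fun x hx => by simp only [(hf x hx).deriv, (hg x hx).deriv])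
  have hc₀ : c = 0 := by
    refine tendsto_nhds_unique (tendsto_const_nhds.congr' ?_) hfg
    filter_upwards [eventually_gt_atTop a] with x hx
    rw [hc hx, add_sub_cancel_left]
  simpa [hc₀] using hc

lemma one_sub_sq_one_sub_mul_div {s x : ℝ} (h : s - x ≠ 0) :
    1 - ((1 - s * x) / (s - x)) ^ 2 = (s ^ 2 - 1) * (1 - x ^ 2) / (s - x) ^ 2 := by
  field_simp
  ring

lemma hasDerivAt_arcsin_one_sub_mul_div {s x : ℝ} (hs : 1 < s) (hx : x ∈ Ioo (-1 : ℝ) 1) :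
    HasDerivAt (fun x => arcsin ((1 - s * x) / (s - x)))
      (-√(s ^ 2 - 1) / ((s - x) * √(1 - x ^ 2))) x := by
  obtain ⟨hx₁, hx₂⟩ := hx
  have hsx : 0 < s - x := by linarith
  have hs₁ : 0 < s ^ 2 - 1 := by nlinarith
  have hx₀ : 0 < 1 - x ^ 2 := by nlinarith
  set u := (1 - s * x) / (s - x)
  have hu : HasDerivAt (fun x => (1 - s * x) / (s - x)) ((1 - s ^ 2) / (s - x) ^ 2) x := by
    refine (((hasDerivAt_id x).const_mul s).const_sub 1 |>.div
      ((hasDerivAt_id x).const_sub s) hsx.ne').congr_deriv ?_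
    simp only [id_eq, mul_one]
    ring
  have h1u : 0 < 1 - u ^ 2 := by rw [one_sub_sq_one_sub_mul_div hsx.ne']; positivity
  have hsqrt : √(1 - u ^ 2) = √(s ^ 2 - 1) * √(1 - x ^ 2) / (s - x) := by
    rw [one_sub_sq_one_sub_mul_div hsx.ne', sqrt_div' _ (sq_nonneg _), sqrt_sq hsx.le,
      sqrt_mul hs₁.le]
  have hu₁ : u ≠ 1 := by rintro h; rw [h] at h1u; norm_num at h1u
  have hu₂ : u ≠ -1 := by rintro h; rw [h] at h1u; norm_num at h1u
  refine ((hasDerivAt_arcsin hu₂ hu₁).comp x hu).congr_deriv ?_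
  rw [hsqrt]
  have := sq_sqrt hs₁.le
  field_simp
  linear_combination this

lemma continuousOn_two_mul_div_sq_sub_sq_mul_sqrt {s : ℝ} (hs : 1 < s) :
    ContinuousOn (fun x => 2 * s / (s ^ 2 - x ^ 2) * √(1 - x ^ 2)) [[-1, 1]] := by
  refine ContinuousOn.mul (ContinuousOn.div (by fun_prop) (by fun_prop) fun x hx => ?_)
    (by fun_prop)
  rw [uIcc_of_le (by norm_num)] at hx
  nlinarith [hx.1, hx.2]

lemma integral_two_mul_div_sq_sub_sq_mul_sqrt {s : ℝ} (hs : 1 < s) :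
    ∫ x in (-1 : ℝ)..1, 2 * s / (s ^ 2 - x ^ 2) * √(1 - x ^ 2)
      = 2 * π * (s - √(s ^ 2 - 1)) := by
  have hsx : ∀ x ∈ Icc (-1 : ℝ) 1, 0 < s - x ∧ 0 < s + x := fun x hx =>
    ⟨by linarith [hx.2], by linarith [hx.1]⟩
  set A : ℝ → ℝ := fun x => arcsin ((1 - s * x) / (s - x))
  -- from `2s √(1 - x²) / (s² - x²) = (2s - (s² - 1) (1 / (s - x) + 1 / (s + x))) / √(1 - x²)`
  set G : ℝ → ℝ := fun x => 2 * s * arcsin x + √(s ^ 2 - 1) * (A x - A (-x))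
  have hG : ∀ x ∈ Ioo (-1 : ℝ) 1, HasDerivAt G (2 * s / (s ^ 2 - x ^ 2) * √(1 - x ^ 2)) x := by
    intro x hx
    have hx' : -x ∈ Ioo (-1 : ℝ) 1 := ⟨by linarith [hx.2], by linarith [hx.1]⟩
    obtain ⟨hsx₁, hsx₂⟩ := hsx x (Ioo_subset_Icc_self hx)
    have hx₀ : 0 < 1 - x ^ 2 := by nlinarith [hx.1, hx.2]
    have hA := hasDerivAt_arcsin_one_sub_mul_div hs hx
    have hA' := (hasDerivAt_arcsin_one_sub_mul_div hs hx').comp x (hasDerivAt_neg x)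
    refine (((hasDerivAt_arcsin hx.1.ne' hx.2.ne).const_mul (2 * s)).add
      ((hA.sub hA').const_mul _)).congr_deriv ?_
    have hsq := sq_sqrt hx₀.le
    have hs₁ := sq_sqrt (show 0 ≤ s ^ 2 - 1 by nlinarith)
    rw [neg_sq, sub_neg_eq_add]
    have hsx₃ : s ^ 2 - x ^ 2 ≠ 0 := by nlinarith
    field_simp
    rw [hsq, hs₁]
    ring
  have hGc : ContinuousOn G (Icc (-1) 1) := by
    have hAc : ContinuousOn A (Icc (-1) 1) :=
      continuous_arcsin.comp_continuousOn
        (by fun_prop (disch := exact fun x hx => (hsx x hx).1.ne'))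
    have hAc' : ContinuousOn (fun x => A (-x)) (Icc (-1) 1) :=
      hAc.comp continuous_neg.continuousOn fun x hx => ⟨by linarith [hx.2], by linarith [hx.1]⟩
    exact ((continuous_const.mul continuous_arcsin).continuousOn).add
      (continuousOn_const.mul (hAc.sub hAc'))
  rw [integral_eq_sub_of_hasDerivAt_of_le (by norm_num) hGc hG
    (continuousOn_two_mul_div_sq_sub_sq_mul_sqrt hs).intervalIntegrable]
  have hs₀ : s - 1 ≠ 0 := by linarith
  have hs₂ : s + 1 ≠ 0 := by linarith
  have h₁ : (1 - s) / (s - 1) = -1 := by field_simp; ring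
  have h₂ : (1 + s) / (s + 1) = 1 := by field_simp; ring
  have h₃ : (1 + -s) / (s + -1) = -1 := by simpa only [sub_eq_add_neg] using h₁
  norm_num [G, A, h₁, h₂, h₃]
  ring

noncomputable def logIntegral (s : ℝ) : ℝ :=
  ∫ x in (-1 : ℝ)..1, log (s ^ 2 - x ^ 2) * √(1 - x ^ 2)

lemma hasDerivAt_logIntegral {s : ℝ} (hs : 1 < s) :
    HasDerivAt logIntegral (∫ x in (-1 : ℝ)..1, 2 * s / (s ^ 2 - x ^ 2) * √(1 - x ^ 2)) s := by
  obtain ⟨a, ha, has⟩ := exists_between hs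
  have hpos : ∀ x ∈ Ι (-1 : ℝ) 1, ∀ r ∈ Ioi a, a ^ 2 - 1 ≤ r ^ 2 - x ^ 2 := by
    intro x hx r hr
    rw [uIoc_of_le (by norm_num)] at hx
    nlinarith [mem_Ioi.1 hr, hx.1, hx.2]
  have hcont : ∀ r ∈ Ioi a,
      ContinuousOn (fun x => log (r ^ 2 - x ^ 2) * √(1 - x ^ 2)) [[-1, 1]] := by
    intro r hr
    refine ContinuousOn.mul (ContinuousOn.log (by fun_prop) fun x hx => ?_) (by fun_prop)
    rw [uIcc_of_le (by norm_num)] at hx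
    nlinarith [mem_Ioi.1 hr, hx.1, hx.2]
  have hderiv : ∀ x ∈ Ι (-1 : ℝ) 1, ∀ r ∈ Ioo a (s + 1),
      HasDerivAt (fun r => log (r ^ 2 - x ^ 2) * √(1 - x ^ 2))
        (2 * r / (r ^ 2 - x ^ 2) * √(1 - x ^ 2)) r := by
    intro x hx r hr
    have := hpos x hx r hr.1
    refine (((hasDerivAt_pow 2 r).sub_const (x ^ 2)).log (by nlinarith)).mul_const _
      |>.congr_deriv (by push_cast; ring)
  have hbound : ∀ x ∈ Ι (-1 : ℝ) 1, ∀ r ∈ Ioo a (s + 1),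
      ‖2 * r / (r ^ 2 - x ^ 2) * √(1 - x ^ 2)‖ ≤ 2 * (s + 1) / (a ^ 2 - 1) := by
    intro x hx r hr
    have h := hpos x hx r hr.1
    have hsqrt : √(1 - x ^ 2) ≤ 1 := sqrt_le_one.2 (by nlinarith)
    have hr₀ : 0 < r := by linarith [hr.1]
    rw [norm_mul, norm_of_nonneg (sqrt_nonneg _),
      norm_of_nonneg (by apply div_nonneg <;> nlinarith)]
    calc 2 * r / (r ^ 2 - x ^ 2) * √(1 - x ^ 2) ≤ 2 * r / (r ^ 2 - x ^ 2) :=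
          mul_le_of_le_one_right (by apply div_nonneg <;> nlinarith) hsqrt
      _ ≤ 2 * (s + 1) / (a ^ 2 - 1) := by
          gcongr ?_ / ?_
          · nlinarith
          · linarith [hr.2]
  refine (hasDerivAt_integral_of_dominated_loc_of_deriv_le (Ioo_mem_nhds has (by linarith))
    ?_ ?_ ?_ (ae_of_all _ hbound) intervalIntegrable_const (ae_of_all _ hderiv)).2
  · filter_upwards [Ioi_mem_nhds has] with r hr
    exact ((hcont r hr).mono uIoc_subset_uIcc).aestronglyMeasurable measurableSet_uIoc
  · exact (hcont s has).intervalIntegrable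
  · exact ((continuousOn_two_mul_div_sq_sub_sq_mul_sqrt hs).mono
      uIoc_subset_uIcc).aestronglyMeasurable measurableSet_uIoc

lemma abs_logIntegral_sub_pi_mul_log_le {t : ℝ} (ht : 1 < t) :
    |logIntegral t - π * log t| ≤ 2 / (t ^ 2 - 1) := by
  have ht₁ : 0 < t ^ 2 - 1 := by nlinarith
  have hpos : ∀ x ∈ [[(-1 : ℝ), 1]], t ^ 2 - 1 ≤ t ^ 2 - x ^ 2 := by
    intro x hx
    rw [uIcc_of_le (by norm_num)] at hx
    nlinarith [hx.1, hx.2]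
  have hcont : ContinuousOn (fun x => log (t ^ 2 - x ^ 2) * √(1 - x ^ 2)) [[-1, 1]] :=
    ContinuousOn.mul (ContinuousOn.log (by fun_prop) fun x hx => by linarith [hpos x hx])
      (by fun_prop)
  have hsplit : logIntegral t - π * log t
      = ∫ x in (-1 : ℝ)..1, log (t ^ 2 - x ^ 2) * √(1 - x ^ 2) - log (t ^ 2) * √(1 - x ^ 2) := by
    have hconst : Continuous fun x : ℝ => log (t ^ 2) * √(1 - x ^ 2) := by fun_prop
    rw [integral_sub hcont.intervalIntegrable (hconst.intervalIntegrable _ _),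
      intervalIntegral.integral_const_mul, integral_sqrt_one_sub_sq, log_pow, logIntegral]
    push_cast
    ring
  have hbound : ∀ x ∈ Ι (-1 : ℝ) 1,
      ‖log (t ^ 2 - x ^ 2) * √(1 - x ^ 2) - log (t ^ 2) * √(1 - x ^ 2)‖ ≤ 1 / (t ^ 2 - 1) := by
    intro x hx
    have hx' := uIoc_subset_uIcc hx
    have hx₁ := hpos x hx'
    rw [uIcc_of_le (by norm_num)] at hx'
    have hsqrt : √(1 - x ^ 2) ≤ 1 := sqrt_le_one.2 (by nlinarith [hx'.1, hx'.2])
    have hlog_le : log (t ^ 2) - log (t ^ 2 - x ^ 2) ≤ 1 / (t ^ 2 - 1) := by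
      rw [← log_div (by positivity) (by linarith)]
      refine (log_le_sub_one_of_pos (div_pos (by positivity) (by linarith))).trans ?_
      rw [div_sub_one (by linarith), div_le_div_iff₀ (by linarith) ht₁]
      nlinarith [hx'.1, hx'.2]
    have hlog_nonneg : 0 ≤ log (t ^ 2) - log (t ^ 2 - x ^ 2) :=
      sub_nonneg.2 (log_le_log (by linarith) (by nlinarith))
    rw [← sub_mul, norm_mul, norm_of_nonneg (sqrt_nonneg _), norm_sub_rev,
      norm_of_nonneg hlog_nonneg]
    exact (mul_le_of_le_one_right hlog_nonneg hsqrt).trans hlog_le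
  calc |logIntegral t - π * log t| ≤ 1 / (t ^ 2 - 1) * |1 - (-1)| := by
        rw [hsplit, ← Real.norm_eq_abs]
        exact norm_integral_le_of_norm_le_const hbound
    _ = 2 / (t ^ 2 - 1) := by norm_num; ring

lemma tendsto_logIntegral_sub_pi_mul_log_atTop :
    Tendsto (fun t => logIntegral t - π * log t) atTop (𝓝 0) := by
  have hbound : Tendsto (fun t : ℝ => 2 / (t ^ 2 - 1)) atTop (𝓝 0) :=
    tendsto_const_nhds.div_atTop (tendsto_atTop_add_const_right _ (-1 : ℝ)
      (tendsto_pow_atTop two_ne_zero))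
  refine squeeze_zero_norm' ?_ hbound
  filter_upwards [eventually_gt_atTop 1] with t ht
  exact abs_logIntegral_sub_pi_mul_log_le ht

lemma hasDerivAt_mul_sqrt_sq_sub_one_sub_arcosh {y : ℝ} (hy : 1 < y) :
    HasDerivAt (fun y => y * √(y ^ 2 - 1) - arcosh y) (2 * √(y ^ 2 - 1)) y := by
  have hy₁ : 0 < y ^ 2 - 1 := by nlinarith
  have hsqrt : HasDerivAt (fun y => √(y ^ 2 - 1)) (2 * y / (2 * √(y ^ 2 - 1))) y := by
    simpa using ((hasDerivAt_pow 2 y).sub_const 1).sqrt hy₁.ne'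
  refine (((hasDerivAt_id y).mul hsqrt).sub (hasDerivAt_arcosh hy)).congr_deriv ?_
  have hsq := sq_sqrt hy₁.le
  have := (sqrt_pos.2 hy₁).ne'
  field_simp
  simp only [id_eq]
  linear_combination -hsq

lemma integral_sqrt_sq_sub_one {t : ℝ} (ht : 1 ≤ t) :
    ∫ y in (1 : ℝ)..t, √(y ^ 2 - 1) = (t * √(t ^ 2 - 1) - arcosh t) / 2 := by
  have hcont : ContinuousOn (fun y => y * √(y ^ 2 - 1) - arcosh y) (Icc 1 t) :=
    (by fun_prop : Continuous fun y : ℝ => y * √(y ^ 2 - 1)).continuousOn.sub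
      (continuousOn_arcosh.mono Icc_subset_Ici_self)
  have h := integral_eq_sub_of_hasDerivAt_of_le ht hcont
    (fun y hy => hasDerivAt_mul_sqrt_sq_sub_one_sub_arcosh hy.1)
    ((by fun_prop : Continuous fun y : ℝ => 2 * √(y ^ 2 - 1)).intervalIntegrable _ _)
  rw [intervalIntegral.integral_const_mul] at h
  norm_num at h
  linarith

lemma tendsto_sqrt_sq_sub_one_div_self_atTop :
    Tendsto (fun t : ℝ => √(t ^ 2 - 1) / t) atTop (𝓝 1) := by
  have h : Tendsto (fun t : ℝ => √(1 - (t ^ 2)⁻¹)) atTop (𝓝 1) := by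
    have := ((tendsto_inv_atTop_zero.comp (tendsto_pow_atTop two_ne_zero)).const_sub
      (1 : ℝ)).sqrt
    simpa using this
  refine h.congr' ?_
  filter_upwards [eventually_gt_atTop 0] with t ht
  rw [← sqrt_sq ht.le, ← sqrt_div' _ (sq_nonneg t), sqrt_sq ht.le, sub_div,
    div_self (by positivity), one_div]

lemma arcosh_sub_log_eq {t : ℝ} (ht : 1 ≤ t) : arcosh t - log t = log (1 + √(t ^ 2 - 1) / t) := by
  have ht₀ : 0 < t := by linarith
  rw [arcosh, ← log_div (by positivity) ht₀.ne', add_div, div_self ht₀.ne']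

lemma tendsto_sq_sub_one_sub_mul_sqrt_atTop :
    Tendsto (fun t : ℝ => t ^ 2 - 1 - t * √(t ^ 2 - 1)) atTop (𝓝 (-(1 / 2))) := by
  have h := tendsto_sqrt_sq_sub_one_div_self_atTop
  have : Tendsto (fun t : ℝ => -(√(t ^ 2 - 1) / t) / (1 + √(t ^ 2 - 1) / t)) atTop
      (𝓝 (-1 / (1 + 1))) := h.neg.div (tendsto_const_nhds.add h) (by norm_num)
  norm_num at this
  refine this.congr' ?_
  filter_upwards [eventually_gt_atTop 1] with t ht
  have ht₁ : 0 < t ^ 2 - 1 := by nlinarith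
  have hsq := sq_sqrt ht₁.le
  have : 0 < √(t ^ 2 - 1) := sqrt_pos.2 ht₁
  field_simp
  linear_combination t * hsq

lemma tendsto_arcosh_sub_log_atTop : Tendsto (fun t => arcosh t - log t) atTop (𝓝 (log 2)) := by
  have h := ((tendsto_const_nhds (x := (1 : ℝ))).add tendsto_sqrt_sq_sub_one_div_self_atTop).log
    (by norm_num)
  norm_num at h
  refine h.congr' ?_
  filter_upwards [eventually_ge_atTop 1] with t ht
  rw [arcosh_sub_log_eq ht]

noncomputable def logIntegralClosedForm (s : ℝ) : ℝ :=
  π * (s ^ 2 - 1 - (s * √(s ^ 2 - 1) - arcosh s) + 1 / 2 - log 2)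

lemma hasDerivAt_logIntegralClosedForm {s : ℝ} (hs : 1 < s) :
    HasDerivAt logIntegralClosedForm (2 * π * (s - √(s ^ 2 - 1))) s := by
  refine ((((hasDerivAt_pow 2 s).sub_const 1).sub
    (hasDerivAt_mul_sqrt_sq_sub_one_sub_arcosh hs)).add_const _ |>.sub_const _ |>.const_mul π)
    |>.congr_deriv ?_
  push_cast
  ring

lemma tendsto_logIntegralClosedForm_sub_pi_mul_log_atTop :
    Tendsto (fun t => logIntegralClosedForm t - π * log t) atTop (𝓝 0) := by
  have h := ((tendsto_sq_sub_one_sub_mul_sqrt_atTop.add tendsto_arcosh_sub_log_atTop).add_const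
    (1 / 2 - log 2)).const_mul π
  norm_num at h
  refine h.congr' (Eventually.of_forall fun t => ?_)
  simp only [logIntegralClosedForm]
  ring

theorem logIntegral_eq_logIntegralClosedForm {s : ℝ} (hs : 1 < s) :
    logIntegral s = logIntegralClosedForm s := by
  refine eqOn_Ioi_of_hasDerivAt_of_tendsto_sub_atTop (f' := fun s => 2 * π * (s - √(s ^ 2 - 1)))
    (fun s hs => ?_) (fun s hs => hasDerivAt_logIntegralClosedForm hs) ?_ hs
  · rw [← integral_two_mul_div_sq_sub_sq_mul_sqrt hs]
    exact hasDerivAt_logIntegral hs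
  · simpa using tendsto_logIntegral_sub_pi_mul_log_atTop.sub
      tendsto_logIntegralClosedForm_sub_pi_mul_log_atTop

theorem stmt8 (s : ℝ) (hs : 1 < s) :
    (1 / π) * ∫ x in (-1 : ℝ)..1, Real.log (s ^ 2 - x ^ 2) * Real.sqrt (1 - x ^ 2)
      = s ^ 2 - 1 - 2 * (∫ y in (1 : ℝ)..s, Real.sqrt (y ^ 2 - 1)) + 1 / 2 - Real.log 2 := by
  rw [integral_sqrt_sq_sub_one hs.le]
  change 1 / π * logIntegral s = _
  rw [logIntegral_eq_logIntegralClosedForm hs, logIntegralClosedForm]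
  field_simp
end

section
/- For every integer l ≥ 0, the probability that a uniformly random involution in S_{k,m-1} (involutions of {1,...,2k+m-1} with m-1 fixed points) has longest increasing subsequence of length ≤ l is at least the corresponding probability for a uniformly random involution in S_{k,m}. In other words, Prob(L^{O}_{k,m-1} ≤ l) ≥ Prob(L^{O}_{k,m} ≤ l). -/
open Equiv

namespace Stmt14Aux

variable {n : ℕ}

/-- Insert a fixed point at position `j`. -/
noncomputable def ins (j : Fin (n + 1)) (π : Perm (Fin n)) : Perm (Fin (n + 1)) :=
  ((finSuccEquiv' j).permCongr).symm π.optionCongr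

lemma ins_apply (j : Fin (n + 1)) (π : Perm (Fin n)) (x : Fin (n + 1)) :
    ins j π x = (finSuccEquiv' j).symm (π.optionCongr (finSuccEquiv' j x)) := rfl

@[simp] lemma ins_at (j : Fin (n + 1)) (π : Perm (Fin n)) : ins j π j = j := by
  simp [ins_apply, finSuccEquiv'_at, finSuccEquiv'_symm_none]

@[simp] lemma ins_succAbove (j : Fin (n + 1)) (π : Perm (Fin n)) (a : Fin n) :
    ins j π (j.succAbove a) = j.succAbove (π a) := by
  simp [ins_apply, finSuccEquiv'_succAbove, finSuccEquiv'_symm_some]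

lemma ins_injective (j : Fin (n + 1)) : Function.Injective (ins (n := n) j) := by
  intro π ρ h
  apply Equiv.ext
  intro a
  have h2 : j.succAbove (π a) = j.succAbove (ρ a) := by
    rw [← ins_succAbove j π a, ← ins_succAbove j ρ a, h]
  exact Fin.succAbove_right_injective h2

lemma ins_mul_self (j : Fin (n + 1)) (π : Perm (Fin n)) :
    ins j π * ins j π = ins j (π * π) := by
  apply Equiv.ext
  intro x
  rcases eq_or_ne x j with rfl | hx
  · simp [Perm.mul_apply]
  · obtain ⟨a, rfl⟩ := Fin.exists_succAbove_eq hx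
    simp [Perm.mul_apply]

@[simp] lemma ins_one (j : Fin (n + 1)) : ins j (1 : Perm (Fin n)) = 1 := by
  apply Equiv.ext
  intro x
  rcases eq_or_ne x j with rfl | hx
  · simp
  · obtain ⟨a, rfl⟩ := Fin.exists_succAbove_eq hx
    simp

lemma ins_invol_iff (j : Fin (n + 1)) (π : Perm (Fin n)) :
    ins j π * ins j π = 1 ↔ π * π = 1 := by
  rw [ins_mul_self]
  constructor
  · intro h
    exact ins_injective j (by rw [h, ins_one])
  · intro h
    rw [h, ins_one]

/-- Fixed points of a map on `Option`. -/
def optFix (f : Perm (Fin n)) :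
    {y : Option (Fin n) // f.optionCongr y = y} ≃ Option {a : Fin n // f a = a} where
  toFun y := Option.pmap (fun a h => (⟨a, h⟩ : {a : Fin n // f a = a})) y.1
    (fun a ha => by
      have h2 := y.2
      rw [ha] at h2
      simpa using h2)
  invFun o := ⟨o.map Subtype.val, by cases o with
    | none => simp
    | some a => simp [a.2]⟩
  left_inv := by rintro ⟨(_ | a), h⟩ <;> simp [Option.pmap]
  right_inv := by rintro (_ | ⟨a, ha⟩) <;> simp [Option.pmap]

lemma card_fix_ins (j : Fin (n + 1)) (π : Perm (Fin n)) :
    Nat.card {x : Fin (n + 1) // ins j π x = x} = Nat.card {a : Fin n // π a = a} + 1 := by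
  have e1 : {x : Fin (n + 1) // ins j π x = x} ≃ {y : Option (Fin n) // π.optionCongr y = y} :=
    (finSuccEquiv' j).subtypeEquiv (fun x => by
      rw [ins_apply]
      exact (Equiv.symm_apply_eq _))
  rw [Nat.card_congr (e1.trans (optFix π)), Finite.card_option]

/-- Delete the fixed point `j`. -/
noncomputable def del (j : Fin (n + 1)) (σ : Perm (Fin (n + 1))) : Perm (Fin n) :=
  Equiv.removeNone ((finSuccEquiv' j).permCongr σ)

lemma optionCongr_removeNone (q : Perm (Option (Fin n))) (h : q none = none) :
    Equiv.optionCongr (Equiv.removeNone q) = q := by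
  apply Equiv.ext
  intro y
  cases y with
  | none => simp [h]
  | some x =>
      have hx : ∃ x', q (some x) = some x' := by
        cases hq : q (some x) with
        | none =>
            exfalso
            exact Option.some_ne_none x (q.injective (hq.trans h.symm))
        | some b => exact ⟨b, rfl⟩
      simp only [optionCongr_apply, Option.map_some]
      exact Equiv.removeNone_some q hx

lemma ins_del (j : Fin (n + 1)) (σ : Perm (Fin (n + 1))) (h : σ j = j) :
    ins j (del j σ) = σ := by
  have hq : ((finSuccEquiv' j).permCongr σ) none = none := by
    simp [permCongr_apply, finSuccEquiv'_symm_none, h, finSuccEquiv'_at]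
  unfold ins del
  rw [optionCongr_removeNone _ hq, Equiv.symm_apply_apply]

lemma del_ins (j : Fin (n + 1)) (π : Perm (Fin n)) : del j (ins j π) = π := by
  apply ins_injective j
  exact ins_del j (ins j π) (ins_at j π)

lemma ins_subseq (j : Fin (n + 1)) (π : Perm (Fin n)) (l : ℕ)
    (h : ∀ s : Finset (Fin (n + 1)), StrictMonoOn (ins j π) s → s.card ≤ l) :
    ∀ s : Finset (Fin n), StrictMonoOn π s → s.card ≤ l := by
  intro s hs
  have hkey := h (s.map ⟨j.succAbove, Fin.succAbove_right_injective⟩) ?_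
  · simpa using hkey
  · intro x hx y hy hxy
    simp only [Finset.coe_map, Set.mem_image, Finset.mem_coe,
      Function.Embedding.coeFn_mk] at hx hy
    obtain ⟨a, ha, rfl⟩ := hx
    obtain ⟨b, hb, rfl⟩ := hy
    have hab : a < b := (Fin.succAbove_lt_succAbove_iff).mp hxy
    rw [ins_succAbove, ins_succAbove]
    exact Fin.succAbove_lt_succAbove_iff.mpr (hs ha hb hab)

/-- Counting pairs (involution, fixed point) by fibering over the involution. -/
lemma count_pairs (N c : ℕ) (R : Perm (Fin N) → Prop)
    (hR : ∀ σ, R σ → Nat.card {x : Fin N // σ x = x} = c) :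
    Nat.card {p : Perm (Fin N) × Fin N // R p.1 ∧ p.1 p.2 = p.2}
      = Nat.card {π : Perm (Fin N) // R π} * c := by
  have e : {p : Perm (Fin N) × Fin N // R p.1 ∧ p.1 p.2 = p.2}
      ≃ Σ σ : {π : Perm (Fin N) // R π}, {x : Fin N // σ.1 x = x} :=
    { toFun := fun p => ⟨⟨p.1.1, p.2.1⟩, ⟨p.1.2, p.2.2⟩⟩
      invFun := fun q => ⟨(q.1.1, q.2.1), ⟨q.1.2, q.2.2⟩⟩
      left_inv := fun p => rfl
      right_inv := fun q => rfl }
  rw [Nat.card_congr e]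
  haveI : Fintype {π : Perm (Fin N) // R π} := Fintype.ofFinite _
  haveI : ∀ σ : {π : Perm (Fin N) // R π}, Fintype {x : Fin N // σ.1 x = x} :=
    fun _ => Fintype.ofFinite _
  rw [Nat.card_eq_fintype_card, Fintype.card_sigma]
  have hfib : ∀ σ : {π : Perm (Fin N) // R π}, Fintype.card {x : Fin N // σ.1 x = x} = c :=
    fun σ => by rw [← Nat.card_eq_fintype_card]; exact hR σ.1 σ.2
  rw [Finset.sum_congr rfl (fun σ _ => hfib σ), Finset.sum_const, smul_eq_mul,
    Finset.card_univ, Nat.card_eq_fintype_card]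

/-- The bijection for sets without the subsequence condition. -/
lemma pairsQ (n c : ℕ) :
    Nat.card {p : Perm (Fin (n + 1)) × Fin (n + 1) //
        (p.1 * p.1 = 1 ∧ Nat.card {x : Fin (n + 1) // p.1 x = x} = c + 1) ∧ p.1 p.2 = p.2}
      = Nat.card {π : Perm (Fin n) //
          π * π = 1 ∧ Nat.card {a : Fin n // π a = a} = c} * (n + 1) := by
  have e : {p : Perm (Fin (n + 1)) × Fin (n + 1) //
      (p.1 * p.1 = 1 ∧ Nat.card {x : Fin (n + 1) // p.1 x = x} = c + 1) ∧ p.1 p.2 = p.2}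
      ≃ {π : Perm (Fin n) // π * π = 1 ∧ Nat.card {a : Fin n // π a = a} = c} × Fin (n + 1) :=
    { toFun := fun p =>
        (⟨del p.1.2 p.1.1, by
          obtain ⟨⟨h1, h2⟩, h3⟩ := p.2
          have hid := ins_del p.1.2 p.1.1 h3
          constructor
          · rw [← ins_invol_iff p.1.2, hid]; exact h1
          · have := card_fix_ins p.1.2 (del p.1.2 p.1.1)
            rw [hid, h2] at this
            omega⟩, p.1.2)
      invFun := fun q =>
        ⟨(ins q.2 q.1.1, q.2), by
          obtain ⟨h1, h2⟩ := q.1.2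
          refine ⟨⟨(ins_invol_iff q.2 q.1.1).mpr h1, ?_⟩, ins_at q.2 q.1.1⟩
          rw [card_fix_ins, h2]⟩
      left_inv := fun p => by
        apply Subtype.ext
        have := ins_del p.1.2 p.1.1 p.2.2
        simp only at this ⊢
        exact Prod.ext this rfl
      right_inv := fun q => by
        apply Prod.ext
        · exact Subtype.ext (del_ins q.2 q.1.1)
        · rfl }
  rw [Nat.card_congr e, Nat.card_prod, Nat.card_eq_fintype_card (α := Fin (n + 1)),
    Fintype.card_fin]

/-- The injection for sets with the subsequence condition. -/
lemma pairsP (n c l : ℕ) :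
    Nat.card {p : Perm (Fin (n + 1)) × Fin (n + 1) //
        ((p.1 * p.1 = 1 ∧ Nat.card {x : Fin (n + 1) // p.1 x = x} = c + 1) ∧
          ∀ s : Finset (Fin (n + 1)), StrictMonoOn p.1 s → s.card ≤ l) ∧ p.1 p.2 = p.2}
      ≤ Nat.card {π : Perm (Fin n) //
          (π * π = 1 ∧ Nat.card {a : Fin n // π a = a} = c) ∧
            ∀ s : Finset (Fin n), StrictMonoOn π s → s.card ≤ l} * (n + 1) := by
  have key := Nat.card_le_card_of_injective
    (α := {p : Perm (Fin (n + 1)) × Fin (n + 1) //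
        ((p.1 * p.1 = 1 ∧ Nat.card {x : Fin (n + 1) // p.1 x = x} = c + 1) ∧
          ∀ s : Finset (Fin (n + 1)), StrictMonoOn p.1 s → s.card ≤ l) ∧ p.1 p.2 = p.2})
    (β := {π : Perm (Fin n) //
          (π * π = 1 ∧ Nat.card {a : Fin n // π a = a} = c) ∧
            ∀ s : Finset (Fin n), StrictMonoOn π s → s.card ≤ l} × Fin (n + 1))
    (fun p =>
      (⟨del p.1.2 p.1.1, by
        obtain ⟨⟨⟨h1, h2⟩, h4⟩, h3⟩ := p.2
        have hid := ins_del p.1.2 p.1.1 h3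
        refine ⟨⟨?_, ?_⟩, ?_⟩
        · rw [← ins_invol_iff p.1.2, hid]; exact h1
        · have := card_fix_ins p.1.2 (del p.1.2 p.1.1)
          rw [hid, h2] at this
          omega
        · apply ins_subseq p.1.2
          rw [hid]
          exact h4⟩, p.1.2))
    (by
      intro p q h
      have h2 : p.1.2 = q.1.2 := congrArg (fun z => z.2) h
      have h1 : del p.1.2 p.1.1 = del q.1.2 q.1.1 :=
        congrArg (fun z => z.1.val) h
      apply Subtype.ext
      have hp := ins_del p.1.2 p.1.1 p.2.2
      have hq := ins_del q.1.2 q.1.1 q.2.2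
      refine Prod.ext ?_ h2
      rw [← hp, ← hq, h1, h2])
  rw [Nat.card_prod, Nat.card_eq_fintype_card (α := Fin (n + 1)), Fintype.card_fin] at key
  exact key

/-- Main inequality, clean form. -/
lemma key (n c l : ℕ) :
    (Nat.card {π : Perm (Fin n) //
          (π * π = 1 ∧ Nat.card {a : Fin n // π a = a} = c) ∧
            ∀ s : Finset (Fin n), StrictMonoOn π s → s.card ≤ l} : ℚ)
        / Nat.card {π : Perm (Fin n) // π * π = 1 ∧ Nat.card {a : Fin n // π a = a} = c}
      ≥ (Nat.card {π : Perm (Fin (n + 1)) //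
          (π * π = 1 ∧ Nat.card {x : Fin (n + 1) // π x = x} = c + 1) ∧
            ∀ s : Finset (Fin (n + 1)), StrictMonoOn π s → s.card ≤ l} : ℚ)
        / Nat.card {π : Perm (Fin (n + 1)) //
            π * π = 1 ∧ Nat.card {x : Fin (n + 1) // π x = x} = c + 1} := by
  set fA := Nat.card {π : Perm (Fin n) //
      (π * π = 1 ∧ Nat.card {a : Fin n // π a = a} = c) ∧
        ∀ s : Finset (Fin n), StrictMonoOn π s → s.card ≤ l} with hfA
  set NA := Nat.card {π : Perm (Fin n) //
      π * π = 1 ∧ Nat.card {a : Fin n // π a = a} = c} with hNA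
  set fB := Nat.card {π : Perm (Fin (n + 1)) //
      (π * π = 1 ∧ Nat.card {x : Fin (n + 1) // π x = x} = c + 1) ∧
        ∀ s : Finset (Fin (n + 1)), StrictMonoOn π s → s.card ≤ l} with hfB
  set NB := Nat.card {π : Perm (Fin (n + 1)) //
      π * π = 1 ∧ Nat.card {x : Fin (n + 1) // π x = x} = c + 1} with hNB
  -- the two counting facts
  have h1 : NB * (c + 1) = NA * (n + 1) := by
    rw [hNB, hNA, ← pairsQ n c, ← count_pairs (n + 1) (c + 1) _ (fun σ hσ => hσ.2)]
  have h2 : fB * (c + 1) ≤ fA * (n + 1) := by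
    rw [hfB, hfA, ← count_pairs (n + 1) (c + 1) _ (fun σ hσ => hσ.1.2)]
    exact pairsP n c l
  rcases Nat.eq_zero_or_pos NA with hA | hA
  · have hB : NB = 0 := by
      have h3 := h1
      rw [hA, Nat.zero_mul] at h3
      rcases Nat.mul_eq_zero.mp h3 with h | h
      · exact h
      · omega
    simp [hA, hB]
  rcases Nat.eq_zero_or_pos NB with hB | hB
  · rw [hB]
    simp only [Nat.cast_zero, div_zero, ge_iff_le]
    positivity
  rw [ge_iff_le, div_le_div_iff₀ (by exact_mod_cast hB) (by exact_mod_cast hA)]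
  have hnat : fB * NA ≤ fA * NB := by
    have step : fB * NA * (c + 1) ≤ fA * NB * (c + 1) := by
      calc fB * NA * (c + 1) = (fB * (c + 1)) * NA := by ring
        _ ≤ (fA * (n + 1)) * NA := Nat.mul_le_mul_right NA h2
        _ = fA * (NA * (n + 1)) := by ring
        _ = fA * (NB * (c + 1)) := by rw [h1]
        _ = fA * NB * (c + 1) := by ring
    exact Nat.le_of_mul_le_mul_right step (Nat.succ_pos c)
  exact_mod_cast hnat

end Stmt14Aux

theorem stmt14 (k m l : ℕ) (hm : 1 ≤ m) :
    (Nat.card {π : Equiv.Perm (Fin (2 * k + (m - 1))) //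
          (π * π = 1 ∧ Nat.card {x : Fin (2 * k + (m - 1)) // π x = x} = m - 1) ∧
            ∀ s : Finset (Fin (2 * k + (m - 1))), StrictMonoOn π s → s.card ≤ l} : ℚ)
        / Nat.card {π : Equiv.Perm (Fin (2 * k + (m - 1))) //
            π * π = 1 ∧ Nat.card {x : Fin (2 * k + (m - 1)) // π x = x} = m - 1}
      ≥ (Nat.card {π : Equiv.Perm (Fin (2 * k + m)) //
          (π * π = 1 ∧ Nat.card {x : Fin (2 * k + m) // π x = x} = m) ∧
            ∀ s : Finset (Fin (2 * k + m)), StrictMonoOn π s → s.card ≤ l} : ℚ)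
        / Nat.card {π : Equiv.Perm (Fin (2 * k + m)) //
            π * π = 1 ∧ Nat.card {x : Fin (2 * k + m) // π x = x} = m} := by
  obtain ⟨c, rfl⟩ : ∃ c, m = c + 1 := ⟨m - 1, by omega⟩
  have h1 : c + 1 - 1 = c := rfl
  have h2 : 2 * k + (c + 1) = (2 * k + c) + 1 := rfl
  rw [h1] at *
  exact Stmt14Aux.key (2 * k + c) c l
end

section
/- Define h(x) = (1/(2πi)) ∫_{-∞}^{∞} e^{-(y² + x²)/2}/(y + ix) dy for real x ≠ 0. Then h(x) = (1/√(2π)) ∫_{-∞}^{x} e^{-y²/2} dy for x < 0, and h(x) = -(1/√(2π)) ∫_{x}^{∞} e^{-y²/2} dy for x > 0. -/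
/-!
For `x > 0` write `1 / (y + i x) = -i ∫₀^∞ e^{(i y - x) t} dt`. By Fubini, `h(x)` becomes a Laplace
transform of the Fourier transform of a Gaussian, which is again a Gaussian:
`∫ e^{-(y² + x²)/2} e^{(i y - x) t} dy = √(2π) e^{-(t + x)²/2}`, and the substitution `u = t + x`
leaves the Gaussian tail over `(x, ∞)`. The case `x < 0` follows because `h` is odd.
-/

open Real MeasureTheory Set
open Complex (I)
open scoped Complex

theorem inv_add_I_mul_eq_integral_Ioi (y : ℝ) {x : ℝ} (hx : 0 < x) :
    ((y : ℂ) + I * x)⁻¹ = -I * ∫ t in Ioi (0 : ℝ), cexp ((I * y - x) * t) := by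
  have hre : (I * y - x).re < 0 := by simpa using hx
  have hfactor : I * y - x = I * (y + I * x) := by
    linear_combination -(x : ℂ) * Complex.I_sq
  rw [integral_exp_mul_complex_Ioi hre, Complex.ofReal_zero, mul_zero, Complex.exp_zero, hfactor]
  field_simp

theorem integrable_uncurry_mul_cexp {f : ℝ → ℂ} (hf : Integrable f) {x : ℝ} (hx : 0 < x) :
    Integrable (Function.uncurry fun (y t : ℝ) => f y * cexp ((I * y - x) * t))
      (volume.prod (volume.restrict (Ioi 0))) := by
  refine (hf.norm.mul_prod (exp_neg_integrableOn_Ioi 0 hx)).mono' ?_ (.of_forall fun p => ?_)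
  · exact hf.aestronglyMeasurable.comp_fst.mul
      (by fun_prop : Continuous fun p : ℝ × ℝ => cexp ((I * p.1 - x) * p.2)).aestronglyMeasurable
  · simp [Function.uncurry, Complex.norm_exp]

theorem integral_div_add_I_mul_eq_integral_Ioi {f : ℝ → ℂ} (hf : Integrable f) {x : ℝ}
    (hx : 0 < x) :
    ∫ y : ℝ, f y / (y + I * x) = -I * ∫ t in Ioi (0 : ℝ), ∫ y : ℝ, f y * cexp ((I * y - x) * t) := by
  calc ∫ y : ℝ, f y / (y + I * x)
      = ∫ y : ℝ, -I * ∫ t in Ioi (0 : ℝ), f y * cexp ((I * y - x) * t) := by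
        refine integral_congr_ae (.of_forall fun y => ?_)
        simp only [div_eq_mul_inv, inv_add_I_mul_eq_integral_Ioi y hx, integral_const_mul]
        ring
    _ = _ := by
        rw [integral_const_mul, integral_integral_swap (integrable_uncurry_mul_cexp hf hx)]

theorem integral_gaussian_mul_cexp (x t : ℝ) :
    ∫ y : ℝ, (Real.exp (-(y ^ 2 + x ^ 2) / 2) : ℂ) * cexp ((I * y - x) * t)
      = (√(2 * π) * Real.exp (-(t + x) ^ 2 / 2) : ℝ) := by
  have hquad (y : ℝ) : (Real.exp (-(y ^ 2 + x ^ 2) / 2) : ℂ) * cexp ((I * y - x) * t)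
      = cexp (-(1 / 2) * y ^ 2 + I * t * y + (-x ^ 2 / 2 - x * t)) := by
    rw [Complex.ofReal_exp, ← Complex.exp_add]
    push_cast
    ring_nf
  have hsqrt : ((π : ℂ) / -(-(1 / 2))) ^ (1 / 2 : ℂ) = (√(2 * π) : ℝ) := by
    rw [Real.sqrt_eq_rpow, Complex.ofReal_cpow (by positivity)]
    push_cast
    ring_nf
  simp_rw [hquad]
  rw [integral_cexp_quadratic (by norm_num), hsqrt]
  push_cast
  congr 2
  linear_combination (t : ℂ) ^ 2 / 2 * Complex.I_sq

theorem integral_Ioi_comp_add_right {E : Type*} [NormedAddCommGroup E] [NormedSpace ℝ E]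
    (f : ℝ → E) (a c : ℝ) : ∫ t in Ioi a, f (t + c) = ∫ u in Ioi (a + c), f u := by
  rw [← (measurePreserving_add_right volume c).setIntegral_preimage_emb
    (measurableEmbedding_addRight c) f, preimage_add_const_Ioi, add_sub_cancel_right]

noncomputable def gaussCauchyIntegral (x : ℝ) : ℂ :=
  (1 / (2 * (π : ℂ) * I)) *
    ∫ y : ℝ, ((Real.exp (-(y ^ 2 + x ^ 2) / 2) : ℝ) : ℂ) / ((y : ℂ) + I * (x : ℂ))

theorem gaussCauchyIntegral_neg (x : ℝ) : gaussCauchyIntegral (-x) = -gaussCauchyIntegral x := by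
  rw [gaussCauchyIntegral, gaussCauchyIntegral, ← mul_neg, ← integral_neg,
    ← integral_neg_eq_self]
  congr 2 with y
  rw [show ((-y : ℝ) : ℂ) + I * ((-x : ℝ) : ℂ) = -((y : ℂ) + I * x) by push_cast; ring,
    div_neg, neg_sq, neg_sq]

theorem gaussCauchyIntegral_of_pos {x : ℝ} (hx : 0 < x) :
    gaussCauchyIntegral x = ((-(1 / √(2 * π) * ∫ u in Ioi x, Real.exp (-u ^ 2 / 2)) : ℝ) : ℂ) := by
  have hf : Integrable fun y : ℝ => Real.exp (-(y ^ 2 + x ^ 2) / 2) := by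
    refine ((integrable_exp_neg_mul_sq (by norm_num : (0 : ℝ) < 1 / 2)).mul_const
      (Real.exp (-x ^ 2 / 2))).congr (.of_forall fun y => ?_)
    dsimp only
    rw [← Real.exp_add]
    ring_nf
  have hshift :
      ∫ t in Ioi (0 : ℝ), Real.exp (-(t + x) ^ 2 / 2) = ∫ u in Ioi x, Real.exp (-u ^ 2 / 2) := by
    simpa using integral_Ioi_comp_add_right (fun u => Real.exp (-u ^ 2 / 2)) 0 x
  have hsq : ((√(2 * π) : ℝ) : ℂ) ^ 2 = 2 * π := by
    rw [← Complex.ofReal_pow, Real.sq_sqrt (by positivity)]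
    push_cast
    ring
  rw [gaussCauchyIntegral, integral_div_add_I_mul_eq_integral_Ioi
    (f := fun y => ((Real.exp (-(y ^ 2 + x ^ 2) / 2) : ℝ) : ℂ)) hf.ofReal hx]
  simp_rw [integral_gaussian_mul_cexp, integral_complex_ofReal, integral_const_mul, hshift]
  push_cast
  field_simp
  rw [hsq]

theorem gaussCauchyIntegral_of_neg {x : ℝ} (hx : x < 0) :
    gaussCauchyIntegral x = ((1 / √(2 * π) * ∫ u in Iic x, Real.exp (-u ^ 2 / 2) : ℝ) : ℂ) := by
  have hreflect :
      ∫ u in Ioi (-x), Real.exp (-u ^ 2 / 2) = ∫ u in Iic x, Real.exp (-u ^ 2 / 2) := by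
    rw [← integral_comp_neg_Iic]
    simp_rw [neg_sq]
  rw [← neg_neg (gaussCauchyIntegral x), ← gaussCauchyIntegral_neg,
    gaussCauchyIntegral_of_pos (neg_pos.2 hx), hreflect, Complex.ofReal_neg, neg_neg]

theorem stmt16_general (x : ℝ) :
    (x < 0 →
      (1 / (2 * (π : ℂ) * Complex.I)) *
          ∫ y : ℝ, ((Real.exp (-(y ^ 2 + x ^ 2) / 2) : ℝ) : ℂ) / ((y : ℂ) + Complex.I * (x : ℂ))
        = (((1 / Real.sqrt (2 * π)) * ∫ y in Set.Iic x, Real.exp (-y ^ 2 / 2) : ℝ) : ℂ)) ∧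
    (0 < x →
      (1 / (2 * (π : ℂ) * Complex.I)) *
          ∫ y : ℝ, ((Real.exp (-(y ^ 2 + x ^ 2) / 2) : ℝ) : ℂ) / ((y : ℂ) + Complex.I * (x : ℂ))
        = ((-((1 / Real.sqrt (2 * π)) * ∫ y in Set.Ioi x, Real.exp (-y ^ 2 / 2)) : ℝ) : ℂ)) :=
  ⟨gaussCauchyIntegral_of_neg, gaussCauchyIntegral_of_pos⟩

theorem stmt16 (x : ℝ) (hx : x ≠ 0) :
    (x < 0 →
      (1 / (2 * (π : ℂ) * Complex.I)) *
          ∫ y : ℝ, ((Real.exp (-(y ^ 2 + x ^ 2) / 2) : ℝ) : ℂ) / ((y : ℂ) + Complex.I * (x : ℂ))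
        = (((1 / Real.sqrt (2 * π)) * ∫ y in Set.Iic x, Real.exp (-y ^ 2 / 2) : ℝ) : ℂ)) ∧
    (0 < x →
      (1 / (2 * (π : ℂ) * Complex.I)) *
          ∫ y : ℝ, ((Real.exp (-(y ^ 2 + x ^ 2) / 2) : ℝ) : ℂ) / ((y : ℂ) + Complex.I * (x : ℂ))
        = ((-((1 / Real.sqrt (2 * π)) * ∫ y in Set.Ioi x, Real.exp (-y ^ 2 / 2)) : ℝ) : ℂ)) :=
  stmt16_general x
end

section
/- Let γ = 2t/k with γ ≤ 1 and let l be a positive integer. Suppose ak ≤ 2t for some fixed a > 0. Then ∫_{3π/4}^{5π/4} exp(-(2√2/3)·k·(1 + γ cos θ)^{3/2}) dθ ≤ exp(-(2√2/3)·k·(1-γ)^{3/2}) · ∫_{3π/4}^{5π/4} exp(-(a^{3/2}/(3·2^{3/4}))·k·|θ - π|³) dθ, and the latter integral is O(k^{-1/3}) as k → ∞. -/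
/-!
Write `1 + γ cos θ = (1 - γ) + γ (1 + cos θ)`. Superadditivity of `t ↦ t ^ (3/2)` splits off
`(1 - γ) ^ (3/2)`, and on `[3π/4, 5π/4]` the Taylor bound `1 + cos θ ≥ (θ - π)² / (2√2)`
together with `γ ≥ a` bounds the rest below by a multiple of `|θ - π|³`. The remaining integral
is at most the integral over all of `ℝ`, which the Gamma integral evaluates to a constant times
`(c k) ^ (-1/3)`.
-/

open Real Asymptotics Filter MeasureTheory Set
open scoped Interval

theorem sq_div_two_mul_sqrt_two_le_one_sub_cos {x : ℝ} (hx : |x| ≤ 1) :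
    x ^ 2 / (2 * √2) ≤ 1 - cos x := by
  have hx2 : x ^ 2 ≤ 1 := by nlinarith [sq_abs x, abs_nonneg x]
  have hcos : cos x ≤ 1 - x ^ 2 / 2 + x ^ 2 * x ^ 2 * (5 / 96) := by
    have h := (abs_le.mp (cos_bound hx)).2
    rw [show |x| ^ 4 = x ^ 2 * x ^ 2 by rw [← sq_abs x]; ring] at h
    linarith
  have hsqrt : (48 / 43 : ℝ) ≤ √2 := by
    rw [le_sqrt (by norm_num) (by norm_num)]; norm_num
  rw [div_le_iff₀ (by positivity)]
  nlinarith [mul_le_mul_of_nonneg_left hx2 (sq_nonneg x),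
    mul_le_mul_of_nonneg_left hsqrt (sq_nonneg x)]

theorem sub_pi_sq_div_two_mul_sqrt_two_le_one_add_cos {θ : ℝ}
    (hθ : θ ∈ Icc (3 * π / 4) (5 * π / 4)) :
    (θ - π) ^ 2 / (2 * √2) ≤ 1 + cos θ := by
  have h : |θ - π| ≤ 1 :=
    abs_le.mpr ⟨by linarith [hθ.1, pi_le_four], by linarith [hθ.2, pi_le_four]⟩
  simpa [cos_sub_pi, sub_neg_eq_add] using sq_div_two_mul_sqrt_two_le_one_sub_cos h

theorem two_rpow_three_fourths_sq : ((2 : ℝ) ^ ((3 : ℝ) / 4)) ^ 2 = 2 * √2 := by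
  rw [← rpow_natCast, ← rpow_mul zero_le_two, sqrt_eq_rpow,
    show (3 : ℝ) / 4 * (2 : ℕ) = 1 + 1 / 2 by norm_num, rpow_add zero_lt_two, rpow_one]

theorem two_mul_sqrt_two_mul_sq_div_rpow (x : ℝ) :
    2 * √2 * (x ^ 2 / (2 * √2)) ^ ((3 : ℝ) / 2) = |x| ^ 3 / (2 : ℝ) ^ ((3 : ℝ) / 4) := by
  have hs : 0 < (2 : ℝ) ^ ((3 : ℝ) / 4) := by positivity
  have hpow : ((|x| / (2 : ℝ) ^ ((3 : ℝ) / 4)) ^ 2) ^ ((3 : ℝ) / 2)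
      = (|x| / (2 : ℝ) ^ ((3 : ℝ) / 4)) ^ 3 := by
    rw [← rpow_natCast, ← rpow_mul (by positivity), ← rpow_natCast]; norm_num
  rw [← two_rpow_three_fourths_sq, ← sq_abs x, ← div_pow, hpow]
  field_simp

theorem abs_sub_pi_pow_three_div_le_mul_one_add_cos_rpow {θ : ℝ}
    (hθ : θ ∈ Icc (3 * π / 4) (5 * π / 4)) :
    |θ - π| ^ 3 / (2 : ℝ) ^ ((3 : ℝ) / 4) ≤ 2 * √2 * (1 + cos θ) ^ ((3 : ℝ) / 2) := by
  rw [← two_mul_sqrt_two_mul_sq_div_rpow]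
  gcongr
  exact sub_pi_sq_div_two_mul_sqrt_two_le_one_add_cos hθ

theorem le_one_add_mul_cos_rpow {a γ θ : ℝ} (ha : 0 ≤ a) (haγ : a ≤ γ) (hγ : γ ≤ 1)
    (hθ : θ ∈ Icc (3 * π / 4) (5 * π / 4)) :
    2 * √2 / 3 * (1 - γ) ^ ((3 : ℝ) / 2)
        + a ^ ((3 : ℝ) / 2) / (3 * (2 : ℝ) ^ ((3 : ℝ) / 4)) * |θ - π| ^ 3
      ≤ 2 * √2 / 3 * (1 + γ * cos θ) ^ ((3 : ℝ) / 2) := by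
  have hγ0 : 0 ≤ γ := ha.trans haγ
  have hcos : 0 ≤ 1 + cos θ := by linarith [neg_one_le_cos θ]
  calc _ = 2 * √2 / 3 * (1 - γ) ^ ((3 : ℝ) / 2)
          + a ^ ((3 : ℝ) / 2) / 3 * (|θ - π| ^ 3 / (2 : ℝ) ^ ((3 : ℝ) / 4)) := by ring
    _ ≤ 2 * √2 / 3 * (1 - γ) ^ ((3 : ℝ) / 2)
          + γ ^ ((3 : ℝ) / 2) / 3 * (2 * √2 * (1 + cos θ) ^ ((3 : ℝ) / 2)) := by
        gcongr; exact abs_sub_pi_pow_three_div_le_mul_one_add_cos_rpow hθ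
    _ = 2 * √2 / 3 * ((1 - γ) ^ ((3 : ℝ) / 2) + (γ * (1 + cos θ)) ^ ((3 : ℝ) / 2)) := by
        rw [mul_rpow hγ0 hcos]; ring
    _ ≤ 2 * √2 / 3 * ((1 - γ) + γ * (1 + cos θ)) ^ ((3 : ℝ) / 2) := by
        gcongr; exact add_rpow_le_rpow_add (by linarith) (by positivity) (by norm_num)
    _ = _ := by ring_nf

theorem integral_exp_one_add_mul_cos_rpow_le {a γ k : ℝ} (ha : 0 ≤ a) (haγ : a ≤ γ)
    (hγ : γ ≤ 1) (hk : 0 ≤ k) :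
    ∫ θ in (3 * π / 4)..(5 * π / 4),
        exp (-(2 * √2 / 3) * k * (1 + γ * cos θ) ^ ((3 : ℝ) / 2))
      ≤ exp (-(2 * √2 / 3) * k * (1 - γ) ^ ((3 : ℝ) / 2)) *
        ∫ θ in (3 * π / 4)..(5 * π / 4),
          exp (-(a ^ ((3 : ℝ) / 2) / (3 * (2 : ℝ) ^ ((3 : ℝ) / 4))) * k * |θ - π| ^ 3) := by
  rw [← intervalIntegral.integral_const_mul]
  refine intervalIntegral.integral_mono_on (by linarith [pi_pos]) ?_ ?_ fun θ hθ => ?_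
  · exact Continuous.intervalIntegrable (by fun_prop (disch := norm_num)) _ _
  · exact Continuous.intervalIntegrable (by fun_prop) _ _
  · rw [← exp_add, exp_le_exp]
    nlinarith [mul_le_mul_of_nonneg_left (le_one_add_mul_cos_rpow ha haγ hγ hθ) hk]

theorem integral_exp_neg_mul_abs_rpow {b p : ℝ} (hb : 0 < b) (hp : 0 < p) :
    ∫ x, exp (-b * |x| ^ p) = 2 * (b ^ (-1 / p) * Gamma (1 / p + 1)) := by
  rw [integral_comp_abs (f := fun x => exp (-b * x ^ p)), integral_exp_neg_mul_rpow hp hb]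

theorem integrable_exp_neg_mul_abs_rpow {b p : ℝ} (hb : 0 < b) (hp : 0 < p) :
    Integrable fun x => exp (-b * |x| ^ p) :=
  -- a non-integrable function has Bochner integral `0`
  .of_integral_ne_zero <| by
    rw [integral_exp_neg_mul_abs_rpow hb hp]
    have := Gamma_pos_of_pos (by positivity : 0 < 1 / p + 1)
    positivity

theorem integral_exp_neg_mul_abs_sub_rpow_isBigO {c p : ℝ} (hc : 0 < c) (hp : 0 < p)
    (a b x₀ : ℝ) :
    (fun k : ℝ => ∫ θ in a..b, exp (-c * k * |θ - x₀| ^ p))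
      =O[atTop] fun k => k ^ (-1 / p) := by
  refine IsBigO.of_bound (2 * (c ^ (-1 / p) * Gamma (1 / p + 1))) ?_
  filter_upwards [eventually_gt_atTop 0] with k hk
  have hck : 0 < c * k := mul_pos hc hk
  calc ‖∫ θ in a..b, exp (-c * k * |θ - x₀| ^ p)‖
      ≤ ∫ θ in Ι a b, ‖exp (-c * k * |θ - x₀| ^ p)‖ :=
        intervalIntegral.norm_integral_le_integral_norm_uIoc
    _ ≤ ∫ θ, exp (-c * k * |θ - x₀| ^ p) := by
        simp only [norm_eq_abs, abs_exp]
        refine setIntegral_le_integral ?_ (ae_of_all _ fun _ => (exp_pos _).le)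
        simpa only [neg_mul] using (integrable_exp_neg_mul_abs_rpow hck hp).comp_sub_right x₀
    _ = 2 * ((c * k) ^ (-1 / p) * Gamma (1 / p + 1)) := by
        rw [integral_sub_right_eq_self (fun θ => exp (-c * k * |θ| ^ p))]
        simpa only [neg_mul] using integral_exp_neg_mul_abs_rpow hck hp
    _ = _ := by
        rw [mul_rpow hc.le hk.le, norm_of_nonneg (by positivity)]; ring

theorem stmt17_general (a : ℝ) (ha : 0 < a) :
    (∀ (k : ℕ) (t : ℝ), 0 < k → 2 * t / k ≤ 1 → a * k ≤ 2 * t →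
      (∫ θ in (3 * π / 4)..(5 * π / 4),
          Real.exp (-(2 * Real.sqrt 2 / 3) * k * (1 + 2 * t / k * Real.cos θ) ^ ((3 : ℝ) / 2)))
        ≤ Real.exp (-(2 * Real.sqrt 2 / 3) * k * (1 - 2 * t / k) ^ ((3 : ℝ) / 2)) *
          ∫ θ in (3 * π / 4)..(5 * π / 4),
            Real.exp (-(a ^ ((3 : ℝ) / 2) / (3 * (2 : ℝ) ^ ((3 : ℝ) / 4))) * k * |θ - π| ^ 3)) ∧
    (fun k : ℕ => ∫ θ in (3 * π / 4)..(5 * π / 4),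
        Real.exp (-(a ^ ((3 : ℝ) / 2) / (3 * (2 : ℝ) ^ ((3 : ℝ) / 4))) * k * |θ - π| ^ 3))
      =O[atTop] fun k : ℕ => (k : ℝ) ^ (-(1 : ℝ) / 3) := by
  refine ⟨fun k t hk hγ haγ => ?_, ?_⟩
  · have hk' : (0 : ℝ) < k := Nat.cast_pos.mpr hk
    exact integral_exp_one_add_mul_cos_rpow_le ha.le ((le_div_iff₀ hk').mpr haγ) hγ hk'.le
  · have hc : 0 < a ^ ((3 : ℝ) / 2) / (3 * (2 : ℝ) ^ ((3 : ℝ) / 4)) := by positivity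
    have h := (integral_exp_neg_mul_abs_sub_rpow_isBigO hc three_pos (3 * π / 4) (5 * π / 4) π
      ).comp_tendsto tendsto_natCast_atTop_atTop
    simpa only [Function.comp_def, rpow_ofNat] using h

theorem stmt17 (a : ℝ) (ha : 0 < a) (l : ℕ) (hl : 0 < l) :
    (∀ (k : ℕ) (t : ℝ), 0 < k → 2 * t / k ≤ 1 → a * k ≤ 2 * t →
      (∫ θ in (3 * π / 4)..(5 * π / 4),
          Real.exp (-(2 * Real.sqrt 2 / 3) * k * (1 + 2 * t / k * Real.cos θ) ^ ((3 : ℝ) / 2)))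
        ≤ Real.exp (-(2 * Real.sqrt 2 / 3) * k * (1 - 2 * t / k) ^ ((3 : ℝ) / 2)) *
          ∫ θ in (3 * π / 4)..(5 * π / 4),
            Real.exp (-(a ^ ((3 : ℝ) / 2) / (3 * (2 : ℝ) ^ ((3 : ℝ) / 4))) * k * |θ - π| ^ 3)) ∧
    (fun k : ℕ => ∫ θ in (3 * π / 4)..(5 * π / 4),
        Real.exp (-(a ^ ((3 : ℝ) / 2) / (3 * (2 : ℝ) ^ ((3 : ℝ) / 4))) * k * |θ - π| ^ 3))
      =O[atTop] fun k : ℕ => (k : ℝ) ^ (-(1 : ℝ) / 3) :=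
  stmt17_general a ha
end
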